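/- arXiv:1604.02449 — 2 statements merged into one kernel-verified Lean document; each statement's English description precedes it below -/
import Mathlib

section
/- Let λ, ξ, γ > 0 and define A(z) = ∫₀^z e^{-(λ/ξ)s}(1-s)^{γ/ξ-1} ds, A = A(1), and P₀(z) = p·e^{(λ/ξ)z}(1-z)^{-γ/ξ}[1 - A(z)/A] for p > 0 and z ∈ [0,1). Then the limit of P₀(z) as z → 1⁻ exists and equals p·ξ/(γA). -/
/-!
The tail `A - A(z) = ∫_z^1 e^{-(λ/ξ)s}(1-s)^{γ/ξ-1} ds` vanishes at `z = 1` like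
`(1-z)^{γ/ξ}`: by L'Hôpital the ratio of the two tends to `e^{-λ/ξ}/(γ/ξ)`, and the factor
`e^{(λ/ξ)z}` cancels the exponential in the limit.
-/

open Filter Set Real MeasureTheory Topology intervalIntegral

section OneSubRpow

variable {f : ℝ → ℝ}

theorem intervalIntegrable_mul_one_sub_rpow (hf : Continuous f) {r : ℝ} (hr : -1 < r)
    (u v : ℝ) : IntervalIntegrable (fun s => f s * (1 - s) ^ r) volume u v := by
  have hrpow : IntervalIntegrable (fun s : ℝ => (1 - s) ^ r) volume u v := by
    simpa using
      (intervalIntegrable_rpow' (a := 1 - u) (b := 1 - v) hr).comp_sub_left 1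
  exact hrpow.continuousOn_mul hf.continuousOn

theorem hasDerivAt_integral_mul_one_sub_rpow_left (hf : Continuous f) {r : ℝ} (hr : -1 < r)
    {x : ℝ} (hx : x < 1) :
    HasDerivAt (fun z => ∫ s in z..1, f s * (1 - s) ^ r) (-(f x * (1 - x) ^ r)) x := by
  refine integral_hasDerivAt_left
    (intervalIntegrable_mul_one_sub_rpow hf hr x 1) ?_ ?_
  · exact (Measurable.stronglyMeasurable (by fun_prop)).stronglyMeasurableAtFilter
  · exact hf.continuousAt.mul ((continuousAt_const.sub continuousAt_id).rpow_const
      (Or.inl (sub_ne_zero.2 hx.ne')))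

theorem tendsto_integral_mul_one_sub_rpow_div (hf : Continuous f) {b : ℝ} (hb : 0 < b) :
    Tendsto (fun z => (∫ s in z..1, f s * (1 - s) ^ (b - 1)) / (1 - z) ^ b) (𝓝[<] 1)
      (𝓝 (f 1 / b)) := by
  have hr : -1 < b - 1 := by linarith
  have hpow_ne {x : ℝ} (hx : x < 1) : (1 - x) ^ (b - 1) ≠ 0 :=
    (rpow_pos_of_pos (sub_pos.2 hx) _).ne'
  have hG {x : ℝ} (hx : x < 1) :
      HasDerivAt (fun z : ℝ => (1 - z) ^ b) (-(b * (1 - x) ^ (b - 1))) x := by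
    simpa [mul_comm] using ((hasDerivAt_id x).const_sub 1).rpow_const (p := b)
      (Or.inl (sub_ne_zero.2 hx.ne'))
  refine HasDerivAt.lhopital_zero_left_on_Ioo (a := 0) one_pos
    (fun x hx => hasDerivAt_integral_mul_one_sub_rpow_left hf hr hx.2) (fun x hx => hG hx.2)
    (fun x hx => by simp [hpow_ne hx.2, hb.ne']) ?_ ?_ ?_
  · have hcont : ContinuousWithinAt (fun z => ∫ s in z..1, f s * (1 - s) ^ (b - 1))
        (Icc 0 1) 1 := by
      simpa [uIcc_of_le zero_le_one] using
        continuousOn_primitive_interval_left ((intervalIntegrable_iff' enorm_ne_top).mp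
          (intervalIntegrable_mul_one_sub_rpow hf hr 0 1)) 1 right_mem_uIcc
    simpa using (hcont.mono Ioo_subset_Icc_self).tendsto.mono_left
      (nhdsWithin_Ioo_eq_nhdsLT zero_lt_one).ge
  · simpa [zero_rpow hb.ne'] using
      ((continuous_const.sub continuous_id).rpow_const fun _ => Or.inr hb.le).tendsto' 1 0
        (by simp [zero_rpow hb.ne']) |>.mono_left nhdsWithin_le_nhds
  · refine ((hf.div_const b).tendsto 1).mono_left nhdsWithin_le_nhds |>.congr' ?_
    filter_upwards [self_mem_nhdsWithin] with x hx
    field_simp [hpow_ne (show x < 1 from hx)]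

end OneSubRpow

theorem stmt3_general (lam xi gam p : ℝ) (hxi : 0 < xi)
    (hgam : 0 < gam) :
    Filter.Tendsto
      (fun z : ℝ => p * Real.exp ((lam/xi) * z) * (1 - z) ^ (-(gam/xi)) *
        (1 - (∫ s in (0:ℝ)..z, Real.exp (-(lam/xi) * s) * (1 - s) ^ (gam/xi - 1)) /
             (∫ s in (0:ℝ)..1, Real.exp (-(lam/xi) * s) * (1 - s) ^ (gam/xi - 1))))
      (nhdsWithin 1 (Set.Iio 1))
      (nhds (p * xi /
        (gam * ∫ s in (0:ℝ)..1, Real.exp (-(lam/xi) * s) * (1 - s) ^ (gam/xi - 1)))) := by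
  set a := lam / xi
  set b := gam / xi
  have hb : 0 < b := div_pos hgam hxi
  set φ : ℝ → ℝ := fun s => exp (-a * s) * (1 - s) ^ (b - 1)
  have hexp : Continuous fun s => exp (-a * s) := by fun_prop
  have hφ (u v : ℝ) : IntervalIntegrable φ volume u v :=
    intervalIntegrable_mul_one_sub_rpow hexp (by linarith) u v
  set A := ∫ s in (0:ℝ)..1, φ s with hA_def
  have hA : 0 < A := intervalIntegral_pos_of_pos_on (hφ 0 1)
    (fun x hx => mul_pos (exp_pos _) (rpow_pos_of_pos (by linarith [hx.2]) _)) one_pos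
  have hlim : Tendsto (fun z => p * exp (a * z) / A * ((∫ s in z..1, φ s) / (1 - z) ^ b))
      (𝓝[<] 1) (𝓝 (p * exp (a * 1) / A * (exp (-a * 1) / b))) :=
    ((by fun_prop : Continuous fun z => p * exp (a * z) / A).tendsto 1).mono_left
      nhdsWithin_le_nhds |>.mul (tendsto_integral_mul_one_sub_rpow_div hexp hb)
  have hval : p * exp (a * 1) / A * (exp (-a * 1) / b) = p * xi / (gam * A) := by
    rw [neg_mul, exp_neg]
    simp only [b]
    field_simp
  rw [← hval]
  refine hlim.congr' ?_
  filter_upwards [self_mem_nhdsWithin] with z hz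
  rw [← integral_interval_sub_left (hφ 0 1) (hφ 0 z), ← hA_def,
    rpow_neg (sub_pos.2 (show z < 1 from hz)).le]
  field_simp

/-- For P₀(z) = p e^{(λ/ξ)z}(1-z)^{-γ/ξ}[1 - A(z)/A], the limit as z → 1⁻
exists and equals pξ/(γA). -/
theorem stmt3 (lam xi gam p : ℝ) (hlam : 0 < lam) (hxi : 0 < xi)
    (hgam : 0 < gam) (hp : 0 < p) :
    Filter.Tendsto
      (fun z : ℝ => p * Real.exp ((lam/xi) * z) * (1 - z) ^ (-(gam/xi)) *
        (1 - (∫ s in (0:ℝ)..z, Real.exp (-(lam/xi) * s) * (1 - s) ^ (gam/xi - 1)) /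
             (∫ s in (0:ℝ)..1, Real.exp (-(lam/xi) * s) * (1 - s) ^ (gam/xi - 1))))
      (nhdsWithin 1 (Set.Iio 1))
      (nhds (p * xi /
        (gam * ∫ s in (0:ℝ)..1, Real.exp (-(lam/xi) * s) * (1 - s) ^ (gam/xi - 1)))) :=
  stmt3_general lam xi gam p hxi hgam
end

section
/- Let γ, ξ, μ > 0 and let (S_n)_{n≥0} be given by S_n = (n+1)/(μ+nξ). Define (T_n)_{n≥0} by T₀ = (γ/(γ+ξ))·(1 + γ/μ)·(1/γ) and for n ≥ 1, T_n = 1/(γ+(n+1)ξ) + (γ/(γ+(n+1)ξ))·S_n + (nξ/(γ+(n+1)ξ))·T_{n-1}. Then for every n ≥ 0, T_n = Σ_{k=0}^{n} [ξ^{n-k}·(n!/k!)/∏_{j=k+1}^{n+1}(γ+jξ)]·((k+1)γ/(μ+kξ) + 1). -/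
/-!
The recursion is first order and linear, `T (n + 1) = a (n + 1) * T n + b (n + 1)` with
`a j = j ξ / (γ + (j + 1) ξ)` and `b k = (1 + γ S k) / (γ + (k + 1) ξ)`; the initial value is `T 0 = b 0`
since `S 0 = 1 / μ`. Unrolling gives
`T n = ∑ k, (∏_{k < j ≤ n} a j) * b k`, and the product of the `a j` together with the factor
`1 / (γ + (k + 1) ξ)` of `b k` is `ξ ^ (n - k) * n! / k!` over `∏_{j = k+1}^{n+1} (γ + j ξ)`.
-/

open Finset Nat

theorem eq_sum_prod_Ioc_mul_of_eq_mul_add {R : Type*} [CommSemiring R] {a b x : ℕ → R}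
    (h0 : x 0 = b 0) (hsucc : ∀ n, x (n + 1) = a (n + 1) * x n + b (n + 1)) (n : ℕ) :
    x n = ∑ k ∈ range (n + 1), (∏ j ∈ Ioc k n, a j) * b k := by
  induction n with
  | zero => simp [h0]
  | succ n ih =>
    rw [hsucc, ih, sum_range_succ _ (n + 1), Ioc_self, prod_empty, one_mul, mul_sum]
    congr 1
    refine sum_congr rfl fun k hk => ?_
    rw [prod_Ioc_succ_top (Nat.lt_succ_iff.mp (mem_range.mp hk))]
    ring

theorem prod_Ioc_mul_div_mul_inv {γ ξ : ℝ} (hγ : 0 < γ) (hξ : 0 ≤ ξ) {k n : ℕ} (hkn : k ≤ n) :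
    (∏ j ∈ Ioc k n, (j : ℝ) * ξ / (γ + (j + 1) * ξ)) * (γ + (k + 1) * ξ)⁻¹ =
      ξ ^ (n - k) * ((n ! : ℝ) / k !) / ∏ j ∈ Icc (k + 1) (n + 1), (γ + (j : ℝ) * ξ) := by
  have hpos : ∀ j : ℕ, 0 < γ + (j : ℝ) * ξ := fun j => by positivity
  induction n, hkn using Nat.le_induction with
  | base => simp [div_eq_mul_inv, factorial_ne_zero]
  | succ n hkn ih =>
    have hprod := (prod_pos fun j _ => hpos j : 0 < ∏ j ∈ Icc (k + 1) (n + 1), (γ + (j : ℝ) * ξ))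
    have hD := hpos (n + 2)
    rw [prod_Ioc_succ_top hkn, mul_right_comm, ih, prod_Icc_succ_top (by omega : k + 1 ≤ n + 1 + 1),
      Nat.sub_add_comm hkn, pow_succ, factorial_succ]
    push_cast at hD ⊢
    field_simp
    ring_nf

/-- Solution of the vacation-period sojourn-time recursion:
T₀ = (γ/(γ+ξ))(1+γ/μ)(1/γ),
T_n = 1/(γ+(n+1)ξ) + (γ/(γ+(n+1)ξ))S_n + (nξ/(γ+(n+1)ξ))T_{n-1},
with S_n = (n+1)/(μ+nξ), is
T_n = Σ_{k=0}^n [ξ^{n-k}(n!/k!)/∏_{j=k+1}^{n+1}(γ+jξ)]·((k+1)γ/(μ+kξ)+1). -/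
theorem stmt8 (gam xi mu : ℝ) (hgam : 0 < gam) (hxi : 0 < xi) (hmu : 0 < mu)
    (S T : ℕ → ℝ)
    (hS : ∀ n : ℕ, S n = (n + 1) / (mu + n * xi))
    (hT0 : T 0 = (gam / (gam + xi)) * (1 + gam / mu) * (1 / gam))
    (hTrec : ∀ n : ℕ, 1 ≤ n →
      T n = 1 / (gam + (n + 1) * xi) + (gam / (gam + (n + 1) * xi)) * S n +
        (n * xi / (gam + (n + 1) * xi)) * T (n - 1)) :
    ∀ n : ℕ, T n = ∑ k ∈ Finset.range (n + 1),
      (xi ^ (n - k) * ((n.factorial : ℝ) / (k.factorial : ℝ)) /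
        ∏ j ∈ Finset.Icc (k + 1) (n + 1), (gam + (j : ℝ) * xi)) *
      ((k + 1) * gam / (mu + k * xi) + 1) := by
  intro n
  rw [eq_sum_prod_Ioc_mul_of_eq_mul_add (x := T) (a := fun j : ℕ => (j : ℝ) * xi / (gam + (j + 1) * xi))
    (b := fun k : ℕ => (gam + (k + 1) * xi)⁻¹ * ((k + 1) * gam / (mu + k * xi) + 1)) ?initial ?step n]
  case initial =>
    rw [hT0]
    field_simp
    ring
  case step =>
    intro m
    have hD : 0 < gam + ((m : ℝ) + 1 + 1) * xi := by positivity
    rw [hTrec (m + 1) (by omega), hS, Nat.add_sub_cancel]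
    push_cast
    field_simp
    ring
  refine sum_congr rfl fun k hk => ?_
  rw [← mul_assoc, prod_Ioc_mul_div_mul_inv hgam hxi.le (Nat.lt_succ_iff.mp (mem_range.mp hk))]
end
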